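/- arXiv:1106.0456 — 4 statements merged into one kernel-verified Lean document; each statement's English description precedes it below -/
import Mathlib

section
/- Let b(x) = (1 - 2ⁿ)·χ_{|x|≤1}(x) + χ_{1<|x|≤2}(x) on ℝⁿ. Then ℋ(b)(x) = 1 - 2ⁿ for |x| ≤ 1, ℋ(b)(x) = 1 - 2ⁿ|x|^{-n} for 1 < |x| ≤ 2, and ℋ(b)(x) = 0 for |x| > 2. -/
open MeasureTheory Metric

/-- Volume of the ball of radius `r` in `ℝⁿ`. -/
noncomputable def ballVol (n : ℕ) (r : ℝ) : ℝ :=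
  (volume (ball (0 : EuclideanSpace ℝ (Fin n)) r)).toReal

/-- The `n`-dimensional Hardy operator
`ℋf(x) = (1/(vₙ |x|ⁿ)) ∫_{|y| < |x|} f(y) dy`. -/
noncomputable def hardyOp (n : ℕ) (f : EuclideanSpace ℝ (Fin n) → ℝ)
    (x : EuclideanSpace ℝ (Fin n)) : ℝ :=
  (ballVol n 1 * ‖x‖ ^ n)⁻¹ * ∫ y in ball (0 : EuclideanSpace ℝ (Fin n)) ‖x‖, f y

/-- `b(x) = (1 - 2ⁿ)·χ_{|x|≤1}(x) + χ_{1<|x|≤2}(x)`. -/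
noncomputable def bFun (n : ℕ) (x : EuclideanSpace ℝ (Fin n)) : ℝ :=
  if ‖x‖ ≤ 1 then 1 - 2 ^ n else if ‖x‖ ≤ 2 then 1 else 0

/-! Write `b = -2ⁿ χ_{|y|≤1} + χ_{|y|≤2}` and use linearity of `ℋ`. By the scaling of
Lebesgue measure, the average of `χ_{|y|≤r}` over the ball `|y| < |x|` is `(min r |x| / |x|)ⁿ`,
and the three cases of the theorem are the three orders of `|x|` relative to `1` and `2`. -/

open Set Module

theorem addHaar_closedBall_inter_ball {E : Type*} [NormedAddCommGroup E] [NormedSpace ℝ E]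
    [MeasurableSpace E] [BorelSpace E] [FiniteDimensional ℝ E] (μ : Measure E)
    [μ.IsAddHaarMeasure] {r R : ℝ} (hr : 0 ≤ r) (hR : 0 < R) :
    μ (closedBall 0 r ∩ ball 0 R) =
      ENNReal.ofReal (min r R ^ finrank ℝ E) * μ (ball 0 1) := by
  rcases le_or_gt R r with h | h
  · have hsub : ball (0 : E) R ⊆ closedBall 0 r :=
      ball_subset_closedBall.trans (closedBall_subset_closedBall h)
    rw [inter_eq_self_of_subset_right hsub, min_eq_right h, Measure.addHaar_ball_of_pos μ _ hR]
  · rw [inter_eq_self_of_subset_left (closedBall_subset_ball h), min_eq_left h.le,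
      Measure.addHaar_closedBall μ _ hr]

section HardyOperator

variable {n : ℕ}

theorem ballVol_one_pos : 0 < ballVol n 1 :=
  ENNReal.toReal_pos (measure_ball_pos volume _ one_pos).ne' measure_ball_lt_top.ne

theorem hardyOp_add {f g : EuclideanSpace ℝ (Fin n) → ℝ} {x : EuclideanSpace ℝ (Fin n)}
    (hf : IntegrableOn f (ball 0 ‖x‖)) (hg : IntegrableOn g (ball 0 ‖x‖)) :
    hardyOp n (f + g) x = hardyOp n f x + hardyOp n g x := by
  simp only [hardyOp, Pi.add_apply, integral_add hf hg, mul_add]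

theorem hardyOp_const_smul (c : ℝ) (f : EuclideanSpace ℝ (Fin n) → ℝ)
    (x : EuclideanSpace ℝ (Fin n)) : hardyOp n (c • f) x = c * hardyOp n f x := by
  simp only [hardyOp, Pi.smul_apply, smul_eq_mul, integral_const_mul]
  ring

theorem integrableOn_ball_indicator_closedBall (r R : ℝ) :
    IntegrableOn ((closedBall 0 r).indicator (1 : EuclideanSpace ℝ (Fin n) → ℝ)) (ball 0 R) :=
  (integrableOn_const (C := (1 : ℝ)) measure_ball_lt_top.ne).indicator measurableSet_closedBall

theorem hardyOp_indicator_closedBall {x : EuclideanSpace ℝ (Fin n)} (hx : x ≠ 0) {r : ℝ}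
    (hr : 0 ≤ r) :
    hardyOp n ((closedBall 0 r).indicator 1) x = (min r ‖x‖ / ‖x‖) ^ n := by
  have hxpos : 0 < ‖x‖ := norm_pos_iff.2 hx
  have hvol : (volume (closedBall 0 r ∩ ball (0 : EuclideanSpace ℝ (Fin n)) ‖x‖)).toReal
      = min r ‖x‖ ^ n * ballVol n 1 := by
    rw [addHaar_closedBall_inter_ball volume hr hxpos, finrank_euclideanSpace_fin,
      ENNReal.toReal_mul, ENNReal.toReal_ofReal (by positivity), ballVol]
  rw [hardyOp, setIntegral_indicator measurableSet_closedBall, Pi.one_def, setIntegral_const,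
    smul_eq_mul, mul_one, inter_comm, measureReal_def, hvol]
  have hv : 0 < ballVol n 1 := ballVol_one_pos
  rw [div_pow]
  field_simp

end HardyOperator

theorem bFun_eq (n : ℕ) :
    bFun n = (-(2 : ℝ) ^ n) • (closedBall (0 : EuclideanSpace ℝ (Fin n)) 1).indicator 1
      + (closedBall 0 2).indicator 1 := by
  funext y
  simp only [bFun, Pi.add_apply, Pi.smul_apply, indicator, mem_closedBall, dist_zero_right,
    Pi.one_apply, smul_eq_mul]
  split_ifs <;> linarith

theorem hardy_of_bFun_general (n : ℕ) (x : EuclideanSpace ℝ (Fin n)) (hx : x ≠ 0) :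
    (‖x‖ ≤ 1 → hardyOp n (bFun n) x = 1 - 2 ^ n) ∧
    (1 < ‖x‖ → ‖x‖ ≤ 2 → hardyOp n (bFun n) x = 1 - 2 ^ n / ‖x‖ ^ n) ∧
    (2 < ‖x‖ → hardyOp n (bFun n) x = 0) := by
  have hb : hardyOp n (bFun n) x =
      -2 ^ n * (min 1 ‖x‖ / ‖x‖) ^ n + (min 2 ‖x‖ / ‖x‖) ^ n := by
    rw [bFun_eq, hardyOp_add ((integrableOn_ball_indicator_closedBall 1 _).smul (-(2 : ℝ) ^ n))
        (integrableOn_ball_indicator_closedBall 2 _), hardyOp_const_smul,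
      hardyOp_indicator_closedBall hx zero_le_one, hardyOp_indicator_closedBall hx zero_le_two]
  have hxne : ‖x‖ ≠ 0 := norm_ne_zero_iff.2 hx
  refine ⟨fun h1 => ?_, fun h1 h2 => ?_, fun h2 => ?_⟩
  · rw [hb, min_eq_right h1, min_eq_right (h1.trans one_le_two), div_self hxne]
    ring
  · rw [hb, min_eq_left h1.le, min_eq_right h2, div_self hxne, div_pow, one_pow]
    ring
  · rw [hb, min_eq_left (one_le_two.trans h2.le), min_eq_left h2.le, div_pow, div_pow, one_pow]
    ring

/-- Explicit computation of `ℋ(b)`: `ℋ(b)(x) = 1 - 2ⁿ` for `|x| ≤ 1`,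
`ℋ(b)(x) = 1 - 2ⁿ|x|⁻ⁿ` for `1 < |x| ≤ 2`, and `ℋ(b)(x) = 0` for `|x| > 2`. -/
theorem hardy_of_bFun (n : ℕ) (hn : 0 < n) (x : EuclideanSpace ℝ (Fin n)) (hx : x ≠ 0) :
    (‖x‖ ≤ 1 → hardyOp n (bFun n) x = 1 - 2 ^ n) ∧
    (1 < ‖x‖ → ‖x‖ ≤ 2 → hardyOp n (bFun n) x = 1 - 2 ^ n / ‖x‖ ^ n) ∧
    (2 < ‖x‖ → hardyOp n (bFun n) x = 0) :=
  hardy_of_bFun_general n x hx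
end

section
/- For any function ã on ℝⁿ with supp ã ⊂ B(0,r), ‖ã‖_∞ ≤ |B(0,r)|^{-1}, and ∫ ã = 0 (a centered (1,∞,0)-atom), one has ∫_{ℝⁿ} |ℋ(ã)(x)| dx ≤ 2ⁿ. -/
open MeasureTheory Metric

/-- A `(1,∞,0)`-atom: supported in `B(x₀,r)`, bounded by `|B(x₀,r)|⁻¹`,
with vanishing integral. -/
def IsAtomInfZero (n : ℕ) (x₀ : EuclideanSpace ℝ (Fin n)) (r : ℝ)
    (a : EuclideanSpace ℝ (Fin n) → ℝ) : Prop :=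
  Measurable a ∧ (∀ x, x ∉ ball x₀ r → a x = 0) ∧
    (∀ x, |a x| ≤ ((volume (ball x₀ r)).toReal)⁻¹) ∧ (∫ x, a x) = 0

/-!
On `B(0,r)` the Hardy transform of a centered atom is an average of the atom, hence bounded by
`|B(0,r)|⁻¹`; outside `B(0,r)` it is the full integral of the atom divided by `vₙ|x|ⁿ`, hence
zero by the cancellation condition. So `|ℋã| ≤ |B(0,r)|⁻¹ 𝟙_{B(0,r)}`, whose integral is `1`.
-/

section SetAverage

variable {α E : Type*} [MeasurableSpace α] {μ : Measure α} [NormedAddCommGroup E]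
  [NormedSpace ℝ E]

theorem norm_setAverage_le_of_norm_le_const {s : Set α} {f : α → E} {C : ℝ} (hs : μ s < ⊤)
    (hC₀ : 0 ≤ C) (hC : ∀ x ∈ s, ‖f x‖ ≤ C) : ‖⨍ x in s, f x ∂μ‖ ≤ C := by
  rw [setAverage_eq, norm_smul, norm_inv, Real.norm_of_nonneg measureReal_nonneg]
  calc (μ.real s)⁻¹ * ‖∫ x in s, f x ∂μ‖
      ≤ (μ.real s)⁻¹ * (C * μ.real s) := by
        gcongr
        exact norm_setIntegral_le_of_norm_le_const hs hC
    _ = C * ((μ.real s)⁻¹ * μ.real s) := by ring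
    _ ≤ C := mul_le_of_le_one_right hC₀ inv_mul_le_one

end SetAverage

namespace EuclideanSpace

variable {n : ℕ}

theorem measureReal_ball_zero (hn : 0 < n) {ρ : ℝ} (hρ : 0 ≤ ρ) :
    volume.real (ball (0 : EuclideanSpace ℝ (Fin n)) ρ) = ballVol n 1 * ρ ^ n := by
  have : Nonempty (Fin n) := Fin.pos_iff_nonempty.mp hn
  rw [measureReal_def, Measure.addHaar_ball volume 0 hρ, ENNReal.toReal_mul,
    ENNReal.toReal_ofReal (by positivity), finrank_euclideanSpace_fin, ballVol, mul_comm]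

theorem hardyOp_eq_setAverage (hn : 0 < n) (f : EuclideanSpace ℝ (Fin n) → ℝ)
    (x : EuclideanSpace ℝ (Fin n)) :
    hardyOp n f x = ⨍ y in ball (0 : EuclideanSpace ℝ (Fin n)) ‖x‖, f y := by
  rw [hardyOp, setAverage_eq, measureReal_ball_zero hn (norm_nonneg x), smul_eq_mul]

theorem abs_hardyOp_le (hn : 0 < n) {f : EuclideanSpace ℝ (Fin n) → ℝ} {C : ℝ}
    (hf : ∀ y, |f y| ≤ C) (x : EuclideanSpace ℝ (Fin n)) : |hardyOp n f x| ≤ C := by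
  rw [hardyOp_eq_setAverage hn, ← Real.norm_eq_abs]
  exact norm_setAverage_le_of_norm_le_const measure_ball_lt_top ((abs_nonneg _).trans (hf 0))
    fun y _ ↦ hf y

theorem hardyOp_eq_zero_of_le_norm {f : EuclideanSpace ℝ (Fin n) → ℝ} {r : ℝ}
    (hsupp : ∀ y, y ∉ ball 0 r → f y = 0) (hint : ∫ y, f y = 0) {x : EuclideanSpace ℝ (Fin n)}
    (hx : r ≤ ‖x‖) : hardyOp n f x = 0 := by
  have hball : ∫ y in ball 0 ‖x‖, f y = ∫ y, f y :=
    setIntegral_eq_integral_of_forall_compl_eq_zero fun y hy ↦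
      hsupp y fun hyr ↦ hy (ball_subset_ball hx hyr)
  rw [hardyOp, hball, hint, mul_zero]

theorem abs_hardyOp_le_indicator (hn : 0 < n) {f : EuclideanSpace ℝ (Fin n) → ℝ} {r C : ℝ}
    (hsupp : ∀ y, y ∉ ball 0 r → f y = 0) (hbdd : ∀ y, |f y| ≤ C) (hint : ∫ y, f y = 0)
    (x : EuclideanSpace ℝ (Fin n)) :
    |hardyOp n f x| ≤ (ball 0 r).indicator (fun _ ↦ C) x := by
  by_cases hx : x ∈ ball 0 r
  · rw [Set.indicator_of_mem hx]
    exact abs_hardyOp_le hn hbdd x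
  · rw [Set.indicator_of_notMem hx, hardyOp_eq_zero_of_le_norm hsupp hint (by simpa using hx),
      abs_zero]

end EuclideanSpace

open EuclideanSpace in
theorem IsAtomInfZero.integral_abs_hardyOp_le_one {n : ℕ} (hn : 0 < n) {r : ℝ}
    {a : EuclideanSpace ℝ (Fin n) → ℝ} (ha : IsAtomInfZero n 0 r a) :
    ∫ x, |hardyOp n a x| ≤ 1 := by
  obtain ⟨-, hsupp, hbdd, hint⟩ := ha
  set B := ball (0 : EuclideanSpace ℝ (Fin n)) r
  have hbound : Integrable (B.indicator fun _ ↦ (volume.real B)⁻¹) :=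
    (integrable_indicator_iff measurableSet_ball).2 (integrableOn_const measure_ball_lt_top.ne)
  calc ∫ x, |hardyOp n a x|
      ≤ ∫ x, B.indicator (fun _ ↦ (volume.real B)⁻¹) x :=
        integral_mono_of_nonneg (.of_forall fun _ ↦ abs_nonneg _) hbound
          (.of_forall (abs_hardyOp_le_indicator hn hsupp hbdd hint))
    _ = (volume.real B)⁻¹ * volume.real B := by
        rw [integral_indicator_const _ measurableSet_ball, smul_eq_mul, mul_comm]
    _ ≤ 1 := inv_mul_le_one

theorem hardy_atom_L1_bound_general (n : ℕ) (hn : 0 < n) (r : ℝ)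
    (a : EuclideanSpace ℝ (Fin n) → ℝ) (ha : IsAtomInfZero n 0 r a) :
    (∫ x, |hardyOp n a x|) ≤ 2 ^ n :=
  (ha.integral_abs_hardyOp_le_one hn).trans (one_le_pow₀ one_le_two)

/-- For a centered `(1,∞,0)`-atom `ã` supported in `B(0,r)`,
`∫_{ℝⁿ} |ℋ(ã)(x)| dx ≤ 2ⁿ`. -/
theorem hardy_atom_L1_bound (n : ℕ) (hn : 0 < n) (r : ℝ) (hr : 0 < r)
    (a : EuclideanSpace ℝ (Fin n) → ℝ) (ha : IsAtomInfZero n 0 r a) :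
    (∫ x, |hardyOp n a x|) ≤ 2 ^ n :=
  hardy_atom_L1_bound_general n hn r a ha
end

section
/- The n-dimensional Hardy operator ℋ maps the atomic Hardy space H¹(ℝⁿ) boundedly into L¹(ℝⁿ): there exists C > 0 (one may take C = 2ⁿ) such that ‖ℋf‖_{L¹} ≤ C‖f‖_{H¹} for all f ∈ H¹(ℝⁿ). -/
open MeasureTheory Metric

/-!
`ℋf(x)` is the average of `f` over `B(0, |x|)`. For an atom `a` on `B(x₀, r)` this average
vanishes unless `|x₀| - r < |x| < |x₀| + r`: below, the ball misses the support of `a`; above,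
it contains it and `∫ a = 0`. In between it is at most `‖a‖_∞ ≤ |B_r|⁻¹` and at most
`‖a‖₁ / |B_{|x|}| ≤ |B_{|x|}|⁻¹`. With `ρ = max(r, |x₀| - r)` this gives
`|ℋa| ≤ |B_ρ|⁻¹ 𝟙_{B(0, 3ρ)}`, whose integral is `3ⁿ`; summing over an atomic decomposition
yields the bound with `C = 3ⁿ`.
-/

open scoped ENNReal

section Average

variable {α E : Type*} [MeasurableSpace α] {μ : Measure α} {s : Set α}
  [NormedAddCommGroup E] [NormedSpace ℝ E]

theorem enorm_setAverage_le (f : α → E) :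
    ‖⨍ x in s, f x ∂μ‖ₑ ≤ (μ s)⁻¹ * ∫⁻ x in s, ‖f x‖ₑ ∂μ := by
  rw [setAverage_eq, enorm_smul]
  gcongr
  · rw [Real.enorm_eq_ofReal_abs, abs_inv, abs_of_nonneg measureReal_nonneg, measureReal_def]
    rcases eq_or_ne (μ s) ∞ with h | h
    · simp [h]
    rcases eq_or_ne (μ s) 0 with h' | h'
    · simp [h']
    rw [ENNReal.ofReal_inv_of_pos (ENNReal.toReal_pos h' h), ENNReal.ofReal_toReal h]
  · exact enorm_integral_le_lintegral_enorm f

theorem enorm_setAverage_le_of_ae_enorm_le {f : α → E} {C : ℝ≥0∞}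
    (hC : ∀ᵐ x ∂μ.restrict s, ‖f x‖ₑ ≤ C) : ‖⨍ x in s, f x ∂μ‖ₑ ≤ C := calc
  ‖⨍ x in s, f x ∂μ‖ₑ ≤ (μ s)⁻¹ * ∫⁻ x in s, ‖f x‖ₑ ∂μ := enorm_setAverage_le f
  _ ≤ (μ s)⁻¹ * ∫⁻ _ in s, C ∂μ := mul_le_mul_right (lintegral_mono_ae hC) _
  _ = C * (μ s * (μ s)⁻¹) := by rw [setLIntegral_const]; ring
  _ ≤ C := mul_le_of_le_one_right' (ENNReal.mul_inv_le_one _)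

theorem setAverage_tsum [CompleteSpace E] {ι : Type*} [Countable ι] {f : ι → α → E}
    (hf : ∀ i, AEStronglyMeasurable (f i) (μ.restrict s))
    (hf' : ∑' i, ∫⁻ x in s, ‖f i x‖ₑ ∂μ ≠ ∞) :
    ⨍ x in s, ∑' i, f i x ∂μ = ∑' i, ⨍ x in s, f i x ∂μ := by
  simp only [setAverage_eq, integral_tsum hf hf', tsum_const_smul'']

end Average

section Haar
variable {E : Type*} [NormedAddCommGroup E] [NormedSpace ℝ E] [MeasurableSpace E] [BorelSpace E]
  [FiniteDimensional ℝ E] (μ : Measure E) [μ.IsAddHaarMeasure]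

theorem lintegral_indicator_ball_inv_measure_ball (x y : E) {c ρ : ℝ} (hc : 0 < c) (hρ : 0 < ρ) :
    ∫⁻ z, (ball x (c * ρ)).indicator (fun _ => (μ (ball y ρ))⁻¹) z ∂μ =
      ENNReal.ofReal (c ^ Module.finrank ℝ E) := by
  rw [lintegral_indicator_const measurableSet_ball, Measure.addHaar_ball_mul_of_pos μ x hc,
    Measure.addHaar_ball_center μ y, mul_left_comm,
    ENNReal.inv_mul_cancel (measure_ball_pos μ 0 hρ).ne' measure_ball_lt_top.ne, mul_one]

end Haar

section Hardy

variable {n : ℕ}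

theorem hardyOp_eq_setAverage (f : EuclideanSpace ℝ (Fin n) → ℝ) (x : EuclideanSpace ℝ (Fin n)) :
    hardyOp n f x = ⨍ y in ball 0 ‖x‖, f y := by
  rw [hardyOp, setAverage_eq, smul_eq_mul]
  rcases (norm_nonneg x).eq_or_lt with hx | hx
  · simp [← hx]
  · rw [measureReal_def, Measure.addHaar_ball_of_pos volume 0 hx, finrank_euclideanSpace_fin,
      ENNReal.toReal_mul, ENNReal.toReal_ofReal (by positivity), ballVol]
    ring

theorem hardyOp_const_mul (c : ℝ) (f : EuclideanSpace ℝ (Fin n) → ℝ)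
    (x : EuclideanSpace ℝ (Fin n)) :
    hardyOp n (fun y => c * f y) x = c * hardyOp n f x := by
  simp only [hardyOp, integral_const_mul]
  ring

theorem hardyOp_tsum {ι : Type*} [Countable ι] {f : ι → EuclideanSpace ℝ (Fin n) → ℝ}
    (hf : ∀ i, AEStronglyMeasurable (f i)) (hf' : ∑' i, ∫⁻ y, ‖f i y‖ₑ ≠ ∞)
    (x : EuclideanSpace ℝ (Fin n)) :
    hardyOp n (fun y => ∑' i, f i y) x = ∑' i, hardyOp n (f i) x := by
  simp only [hardyOp_eq_setAverage]
  exact setAverage_tsum (fun i => (hf i).restrict) (ne_top_of_le_ne_top hf'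
    (ENNReal.tsum_le_tsum fun i => setLIntegral_le_lintegral _ _))

namespace IsAtomInfZero

variable {x₀ : EuclideanSpace ℝ (Fin n)} {r : ℝ} {a : EuclideanSpace ℝ (Fin n) → ℝ}

theorem enorm_le (hr : 0 < r) (ha : IsAtomInfZero n x₀ r a) (x : EuclideanSpace ℝ (Fin n)) :
    ‖a x‖ₑ ≤ (volume (ball x₀ r))⁻¹ := by
  have hB := (measure_ball_pos volume x₀ hr).ne'
  rw [Real.enorm_eq_ofReal_abs, ← ENNReal.ofReal_toReal (ENNReal.inv_ne_top.2 hB),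
    ENNReal.toReal_inv]
  exact ENNReal.ofReal_le_ofReal (ha.2.2.1 x)

theorem lintegral_enorm_le_one (hr : 0 < r) (ha : IsAtomInfZero n x₀ r a) :
    ∫⁻ x, ‖a x‖ₑ ≤ 1 := calc
  ∫⁻ x, ‖a x‖ₑ ≤ ∫⁻ x, (ball x₀ r).indicator (fun _ => (volume (ball x₀ r))⁻¹) x := by
    refine lintegral_mono fun x => ?_
    by_cases hx : x ∈ ball x₀ r
    · simpa [hx] using ha.enorm_le hr x
    · simp [ha.2.1 x hx]
  _ = 1 := by
    rw [lintegral_indicator_const measurableSet_ball,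
      ENNReal.inv_mul_cancel (measure_ball_pos volume x₀ hr).ne' measure_ball_lt_top.ne]

theorem hardyOp_eq_zero (ha : IsAtomInfZero n x₀ r a) {x : EuclideanSpace ℝ (Fin n)}
    (hx : ‖x‖ ≤ ‖x₀‖ - r ∨ ‖x₀‖ + r ≤ ‖x‖) : hardyOp n a x = 0 := by
  obtain ⟨-, hsupp, -, hmean⟩ := ha
  rw [hardyOp_eq_setAverage, setAverage_eq]
  convert smul_zero _
  rcases hx with hx | hx
  · have hdisj : Disjoint (ball 0 ‖x‖) (ball x₀ r) :=
      ball_disjoint_ball (by rwa [dist_zero_left, le_sub_iff_add_le] at *)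
    exact setIntegral_eq_zero_of_forall_eq_zero fun y hy => hsupp y (hdisj.notMem_of_mem_left hy)
  · have hsub : ball x₀ r ⊆ ball 0 ‖x‖ := ball_subset_ball' (by rwa [dist_zero_right, add_comm])
    rw [setIntegral_eq_integral_of_forall_compl_eq_zero fun y hy => hsupp y fun h => hy (hsub h),
      hmean]

theorem enorm_hardyOp_le (hr : 0 < r) (ha : IsAtomInfZero n x₀ r a) (x : EuclideanSpace ℝ (Fin n)) :
    ‖hardyOp n a x‖ₑ ≤ (ball 0 (3 * max r (‖x₀‖ - r))).indicator
      (fun _ => (volume (ball (0 : EuclideanSpace ℝ (Fin n)) (max r (‖x₀‖ - r))))⁻¹) x := by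
  by_cases hx : ‖x₀‖ - r < ‖x‖ ∧ ‖x‖ < ‖x₀‖ + r
  case neg =>
    rw [ha.hardyOp_eq_zero (by contrapose! hx; exact hx), enorm_zero]
    exact bot_le
  have hx3 : x ∈ ball 0 (3 * max r (‖x₀‖ - r)) := by
    rw [mem_ball_zero_iff]
    linarith [le_max_left r (‖x₀‖ - r), le_max_right r (‖x₀‖ - r)]
  rw [Set.indicator_of_mem hx3, hardyOp_eq_setAverage]
  rcases max_cases r (‖x₀‖ - r) with ⟨hρ, -⟩ | ⟨hρ, -⟩ <;> rw [hρ]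
  · rw [← Measure.addHaar_ball_center volume x₀]
    exact enorm_setAverage_le_of_ae_enorm_le (ae_of_all _ (ha.enorm_le hr))
  · have hL1 : ∫⁻ y in ball 0 ‖x‖, ‖a y‖ₑ ≤ 1 :=
      (setLIntegral_le_lintegral _ _).trans (ha.lintegral_enorm_le_one hr)
    calc ‖⨍ y in ball 0 ‖x‖, a y‖ₑ ≤ (volume (ball (0 : EuclideanSpace ℝ (Fin n)) ‖x‖))⁻¹ * 1 :=
          (enorm_setAverage_le a).trans (mul_le_mul_right hL1 _)
      _ ≤ (volume (ball (0 : EuclideanSpace ℝ (Fin n)) (‖x₀‖ - r)))⁻¹ := by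
          rw [mul_one]
          exact ENNReal.inv_le_inv' (measure_mono (ball_subset_ball hx.1.le))

end IsAtomInfZero

theorem hardyOp_eq_tsum_of_atomic {f : EuclideanSpace ℝ (Fin n) → ℝ} {lam : ℕ → ℝ}
    {a : ℕ → EuclideanSpace ℝ (Fin n) → ℝ} {c : ℕ → EuclideanSpace ℝ (Fin n)} {r : ℕ → ℝ}
    (hr : ∀ k, 0 < r k) (ha : ∀ k, IsAtomInfZero n (c k) (r k) (a k))
    (hlam : Summable fun k => |lam k|) (hf : ∀ x, f x = ∑' k, lam k * a k x)
    (x : EuclideanSpace ℝ (Fin n)) :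
    hardyOp n f x = ∑' k, lam k * hardyOp n (a k) x := by
  have hlam' : ∑' k, ‖lam k‖ₑ ≠ ∞ := tsum_enorm_ne_top_iff_summable_norm.2 hlam
  rw [show f = fun y => ∑' k, lam k * a k y from funext hf,
    hardyOp_tsum (fun k => ((ha k).1.const_mul _).aestronglyMeasurable) ?_ x]
  · simp only [hardyOp_const_mul]
  refine ne_top_of_le_ne_top hlam' (ENNReal.tsum_le_tsum fun k => ?_)
  calc ∫⁻ y, ‖lam k * a k y‖ₑ = ‖lam k‖ₑ * ∫⁻ y, ‖a k y‖ₑ := by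
        simp only [enorm_mul]
        exact lintegral_const_mul _ (ha k).1.enorm
    _ ≤ ‖lam k‖ₑ := mul_le_of_le_one_right' ((ha k).lintegral_enorm_le_one (hr k))

end Hardy

theorem hardy_H1_to_L1_general (n : ℕ) :
    ∃ C : ℝ, 0 < C ∧ ∀ (f : EuclideanSpace ℝ (Fin n) → ℝ) (lam : ℕ → ℝ)
      (a : ℕ → EuclideanSpace ℝ (Fin n) → ℝ) (c : ℕ → EuclideanSpace ℝ (Fin n))
      (r : ℕ → ℝ), (∀ k, 0 < r k) → (∀ k, IsAtomInfZero n (c k) (r k) (a k)) →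
      Summable (fun k => |lam k|) → (∀ x, f x = ∑' k, lam k * a k x) →
      eLpNorm (hardyOp n f) 1 volume ≤ ENNReal.ofReal (C * ∑' k, |lam k|) := by
  refine ⟨3 ^ n, by positivity, fun f lam a c r hr ha hlam hf => ?_⟩
  set ρ := fun k => max (r k) (‖c k‖ - r k)
  set g := fun k => (ball (0 : EuclideanSpace ℝ (Fin n)) (3 * ρ k)).indicator
    (fun _ => (volume (ball (0 : EuclideanSpace ℝ (Fin n)) (ρ k)))⁻¹)
  have hg : ∀ k, Measurable (g k) := fun k => measurable_const.indicator measurableSet_ball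
  have hpt : ∀ x, ‖hardyOp n f x‖ₑ ≤ ∑' k, ‖lam k‖ₑ * g k x := fun x => by
    rw [hardyOp_eq_tsum_of_atomic hr ha hlam hf x]
    refine enorm_tsum_le_tsum_enorm.trans (ENNReal.tsum_le_tsum fun k => ?_)
    rw [enorm_mul]
    exact mul_le_mul_right ((ha k).enorm_hardyOp_le (hr k) x) _
  calc eLpNorm (hardyOp n f) 1 volume = ∫⁻ x, ‖hardyOp n f x‖ₑ := eLpNorm_one_eq_lintegral_enorm
    _ ≤ ∫⁻ x, ∑' k, ‖lam k‖ₑ * g k x := lintegral_mono hpt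
    _ = ∑' k, ‖lam k‖ₑ * ENNReal.ofReal (3 ^ n) := by
      rw [lintegral_tsum fun k => ((hg k).const_mul _).aemeasurable]
      congr! 2 with k
      rw [lintegral_const_mul _ (hg k), lintegral_indicator_ball_inv_measure_ball _ _ _ three_pos
        (lt_max_of_lt_left (hr k)), finrank_euclideanSpace_fin]
    _ = ENNReal.ofReal (3 ^ n * ∑' k, |lam k|) := by
      simp only [ENNReal.tsum_mul_right, Real.enorm_eq_ofReal_abs,
        ← ENNReal.ofReal_tsum_of_nonneg (fun _ => abs_nonneg _) hlam]
      rw [← ENNReal.ofReal_mul (by positivity), mul_comm]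

/-- The Hardy operator maps the atomic Hardy space `H¹(ℝⁿ)` boundedly into `L¹(ℝⁿ)`:
there is `C > 0` such that whenever `f = Σ λₖ aₖ` with `(1,∞,0)`-atoms `aₖ` and
`Σ|λₖ| < ∞`, one has `‖ℋf‖_{L¹} ≤ C · Σ|λₖ|`; taking the infimum over atomic
decompositions, `‖ℋf‖_{L¹} ≤ C ‖f‖_{H¹}`. -/
theorem hardy_H1_to_L1 (n : ℕ) (hn : 0 < n) :
    ∃ C : ℝ, 0 < C ∧ ∀ (f : EuclideanSpace ℝ (Fin n) → ℝ) (lam : ℕ → ℝ)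
      (a : ℕ → EuclideanSpace ℝ (Fin n) → ℝ) (c : ℕ → EuclideanSpace ℝ (Fin n))
      (r : ℕ → ℝ), (∀ k, 0 < r k) → (∀ k, IsAtomInfZero n (c k) (r k) (a k)) →
      Summable (fun k => |lam k|) → (∀ x, f x = ∑' k, lam k * a k x) →
      eLpNorm (hardyOp n f) 1 volume ≤ ENNReal.ofReal (C * ∑' k, |lam k|) :=
  hardy_H1_to_L1_general n
end

section
/- Let b ∈ BMO(ℝⁿ) and let ã be a centered (1,∞,0)-atom supported in B(0,r). Then ∫_{B(0,r)} |b(x) - b_{B(0,r)}| |ℋ(ã)(x)| dx ≤ C‖b‖_{BMO} with C depending only on n. -/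
open MeasureTheory Metric

/-!
Since `vₙ |x|ⁿ = |B(0,|x|)|`, the Hardy operator is an average over a ball, so
`|ℋã| ≤ ‖ã‖_∞ ≤ |B(0,r)|⁻¹` everywhere. The weighted integral is therefore at most the
mean oscillation of `b` over `B(0,r)`, which is bounded by the BMO constant.
-/

theorem ballVol_one_mul_pow {n : ℕ} {ρ : ℝ} (hρ : 0 < ρ) :
    ballVol n 1 * ρ ^ n = volume.real (ball (0 : EuclideanSpace ℝ (Fin n)) ρ) := by
  rw [measureReal_def, Measure.addHaar_ball_of_pos volume 0 hρ, finrank_euclideanSpace_fin,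
    ENNReal.toReal_mul, ENNReal.toReal_ofReal (by positivity), mul_comm]
  rfl

theorem abs_hardyOp_le {n : ℕ} {f : EuclideanSpace ℝ (Fin n) → ℝ} {K : ℝ}
    (hf : ∀ y, |f y| ≤ K) (x : EuclideanSpace ℝ (Fin n)) : |hardyOp n f x| ≤ K := by
  have hK : 0 ≤ K := (abs_nonneg _).trans (hf 0)
  rcases (norm_nonneg x).eq_or_lt with hx | hx
  · simp [hardyOp, ← hx, hK]
  have hvol : 0 < volume.real (ball (0 : EuclideanSpace ℝ (Fin n)) ‖x‖) := by
    rw [← ballVol_one_mul_pow hx]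
    exact mul_pos (ENNReal.toReal_pos (measure_ball_pos volume 0 one_pos).ne'
      measure_ball_lt_top.ne) (pow_pos hx n)
  have hint : |∫ y in ball (0 : EuclideanSpace ℝ (Fin n)) ‖x‖, f y|
      ≤ K * volume.real (ball (0 : EuclideanSpace ℝ (Fin n)) ‖x‖) :=
    (Real.norm_eq_abs _).symm.trans_le <| norm_setIntegral_le_of_norm_le_const
      measure_ball_lt_top fun y _ => (Real.norm_eq_abs _).trans_le (hf y)
  rw [hardyOp, ballVol_one_mul_pow hx, abs_mul, abs_inv, abs_of_pos hvol]
  calc _ ≤ _ := mul_le_mul_of_nonneg_left hint (inv_nonneg.mpr hvol.le)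
    _ = K := by field_simp

theorem setIntegral_mul_le_setAverage {α : Type*} [MeasurableSpace α] {μ : Measure α}
    {s : Set α} {g w : α → ℝ} (hg : ∀ x, 0 ≤ g x) (hgi : IntegrableOn g s μ)
    (hw₀ : ∀ x, 0 ≤ w x) (hw : ∀ x, w x ≤ (μ.real s)⁻¹) :
    ∫ x in s, g x * w x ∂μ ≤ ⨍ x in s, g x ∂μ := by
  rw [setAverage_eq, smul_eq_mul, ← integral_const_mul]
  refine integral_mono_of_nonneg (.of_forall fun x => mul_nonneg (hg x) (hw₀ x))
    (hgi.const_mul _) (.of_forall fun x => ?_)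
  exact (mul_le_mul_of_nonneg_left (hw x) (hg x)).trans_eq (mul_comm _ _)

theorem bmo_times_hardy_atom_bound_general (n : ℕ) :
    ∃ C : ℝ, 0 < C ∧ ∀ (b : EuclideanSpace ℝ (Fin n) → ℝ),
      LocallyIntegrable b volume → ∀ M : ℝ,
      (∀ (c : EuclideanSpace ℝ (Fin n)) (ρ : ℝ), 0 < ρ →
        (⨍ y in ball c ρ, |b y - ⨍ z in ball c ρ, b z|) ≤ M) →
      ∀ (r : ℝ), 0 < r → ∀ (a : EuclideanSpace ℝ (Fin n) → ℝ),
        IsAtomInfZero n 0 r a →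
        (∫ x in ball (0 : EuclideanSpace ℝ (Fin n)) r,
            |b x - ⨍ z in ball (0 : EuclideanSpace ℝ (Fin n)) r, b z| *
              |hardyOp n a x|) ≤ C * M := by
  refine ⟨1, one_pos, fun b hb M hM r hr a ha => ?_⟩
  obtain ⟨-, -, ha_le, -⟩ := ha
  have hbi : IntegrableOn b (ball 0 r) volume :=
    (hb.integrableOn_isCompact (isCompact_closedBall 0 r)).mono_set ball_subset_closedBall
  rw [one_mul]
  calc _ ≤ ⨍ x in ball (0 : EuclideanSpace ℝ (Fin n)) r,
        |b x - ⨍ z in ball (0 : EuclideanSpace ℝ (Fin n)) r, b z| :=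
        setIntegral_mul_le_setAverage (fun _ => abs_nonneg _)
          (hbi.sub (integrableOn_const measure_ball_lt_top.ne)).abs
          (fun _ => abs_nonneg _) (abs_hardyOp_le ha_le)
    _ ≤ M := hM 0 r hr

/-- For `b ∈ BMO(ℝⁿ)` (with BMO bound `M`) and a centered `(1,∞,0)`-atom `ã`
supported in `B(0,r)`,
`∫_{B(0,r)} |b(x) - b_{B(0,r)}| |ℋ(ã)(x)| dx ≤ C·M ≤ C‖b‖_{BMO}` with `C = C(n)`. -/
theorem bmo_times_hardy_atom_bound (n : ℕ) (hn : 0 < n) :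
    ∃ C : ℝ, 0 < C ∧ ∀ (b : EuclideanSpace ℝ (Fin n) → ℝ),
      LocallyIntegrable b volume → ∀ M : ℝ,
      (∀ (c : EuclideanSpace ℝ (Fin n)) (ρ : ℝ), 0 < ρ →
        (⨍ y in ball c ρ, |b y - ⨍ z in ball c ρ, b z|) ≤ M) →
      ∀ (r : ℝ), 0 < r → ∀ (a : EuclideanSpace ℝ (Fin n) → ℝ),
        IsAtomInfZero n 0 r a →
        (∫ x in ball (0 : EuclideanSpace ℝ (Fin n)) r,
            |b x - ⨍ z in ball (0 : EuclideanSpace ℝ (Fin n)) r, b z| *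
              |hardyOp n a x|) ≤ C * M :=
  bmo_times_hardy_atom_bound_general n
end
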